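/- arXiv:1811.10834 — 5 statements merged into one kernel-verified Lean document; each statement's English description precedes it below -/
import Mathlib

section
/- For real numbers $a, b$ with $a \le 0 \le b$, the integral $\int_0^{\infty} \frac{(\kappa_q(a) - \kappa_q(b))^2}{q}\, dq \le 10(a-b)^2$, where for $q > 0$, $\kappa_q(y) := \min(q, \max(q/2, y))$. -/
/-! Since `a ≤ 0` pins `κ_q(a)` at `q/2` and `κ_q(b)` lies in `[q/2, q]`, the integrand is at most
`q/4`, and it vanishes once `q ≥ 2b` because then `κ_q(b) = q/2` as well. Hence the integral is at
most `∫₀^{2b} q/4 dq = b²/2 ≤ (a - b)²/2`. -/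

open MeasureTheory

/-- The clamping function `κ_q(y) = min(q, max(q/2, y))`. -/
noncomputable def kappa (q y : ℝ) : ℝ := min q (max (q / 2) y)

theorem kappa_of_le_half {q y : ℝ} (hq : 0 ≤ q) (hy : y ≤ q / 2) : kappa q y = q / 2 := by
  rw [kappa, max_eq_left hy, min_eq_right (by linarith)]

theorem half_le_kappa {q : ℝ} (hq : 0 ≤ q) (y : ℝ) : q / 2 ≤ kappa q y :=
  le_min (by linarith) (le_max_left _ _)

theorem kappa_le (q y : ℝ) : kappa q y ≤ q :=
  min_le_left _ _

theorem sq_sub_kappa_div_le_indicator {a b q : ℝ} (ha : a ≤ 0) (hq : 0 < q) :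
    (kappa q a - kappa q b) ^ 2 / q ≤ (Set.Ioc 0 (2 * b)).indicator (fun q => q / 4) q := by
  have hka : kappa q a = q / 2 := kappa_of_le_half hq.le (by linarith)
  by_cases hqb : q ≤ 2 * b
  · rw [Set.indicator_of_mem (Set.mem_Ioc.mpr ⟨hq, hqb⟩), hka, div_le_div_iff₀ hq (by norm_num)]
    nlinarith [half_le_kappa hq.le b, kappa_le q b]
  · rw [Set.indicator_of_notMem (fun h => hqb h.2), hka,
      kappa_of_le_half hq.le (by linarith), sub_self]
    simp

theorem integral_Ioi_indicator_Ioc_div_four {c : ℝ} (hc : 0 ≤ c) :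
    ∫ q in Set.Ioi (0 : ℝ), (Set.Ioc 0 c).indicator (fun q => q / 4) q = c ^ 2 / 8 := by
  rw [integral_indicator measurableSet_Ioc, Measure.restrict_restrict measurableSet_Ioc,
    Set.inter_eq_left.mpr Set.Ioc_subset_Ioi_self, ← intervalIntegral.integral_of_le hc,
    intervalIntegral.integral_div, integral_id]
  ring

theorem integrableOn_Ioi_indicator_Ioc_div_four (c : ℝ) :
    IntegrableOn ((Set.Ioc 0 c).indicator (fun q : ℝ => q / 4)) (Set.Ioi 0) := by
  rw [IntegrableOn, integrable_indicator_iff measurableSet_Ioc]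
  exact (continuous_id.div_const 4).integrableOn_Ioc.mono_measure Measure.restrict_le_self

theorem kappa_integral_case_nonpos (a b : ℝ) (ha : a ≤ 0) (hb : 0 ≤ b) :
    (∫ q in Set.Ioi (0 : ℝ), (kappa q a - kappa q b) ^ 2 / q) ≤ 10 * (a - b) ^ 2 := by
  have hbound : (∫ q in Set.Ioi (0 : ℝ), (kappa q a - kappa q b) ^ 2 / q) ≤
      ∫ q in Set.Ioi (0 : ℝ), (Set.Ioc 0 (2 * b)).indicator (fun q => q / 4) q := by
    refine integral_mono_of_nonneg ?_ (integrableOn_Ioi_indicator_Ioc_div_four _) ?_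
    · filter_upwards [ae_restrict_mem measurableSet_Ioi] with q (hq : 0 < q)
      positivity
    · filter_upwards [ae_restrict_mem measurableSet_Ioi] with q (hq : 0 < q)
      exact sq_sub_kappa_div_le_indicator ha hq
  rw [integral_Ioi_indicator_Ioc_div_four (by linarith)] at hbound
  nlinarith [mul_nonneg (neg_nonneg.mpr ha) hb]
end

section
/- For real numbers $a, b$ with $0 < a \le b \le 2a$, the integral $\int_0^{\infty} \frac{(\kappa_q(a) - \kappa_q(b))^2}{q}\, dq \le (a-b)^2 \ln 4$, where for $q > 0$, $\kappa_q(y) := \min(q, \max(q/2, y))$. -/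
open MeasureTheory

/-!
For fixed `q`, `y ↦ κ_q(y)` is a clamp, hence `1`-Lipschitz, so the integrand is at most
`(a - b)² / q`. Moreover `κ_q(a) = κ_q(b)` unless `a < q ≤ 2b`, so the integral is at most
`(a - b)² ∫_a^{2b} dq / q = (a - b)² log (2b / a) ≤ (a - b)² log 4`.
-/

open Set

lemma kappa_of_le {q y : ℝ} (h : q ≤ y) : kappa q y = q :=
  min_eq_left (h.trans (le_max_right _ _))

lemma kappa_of_two_mul_le {q y : ℝ} (hy : 0 ≤ y) (h : 2 * y ≤ q) : kappa q y = q / 2 := by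
  rw [kappa, max_eq_left (by linarith), min_eq_right (by linarith)]

lemma abs_kappa_sub_kappa_le (q a b : ℝ) : |kappa q a - kappa q b| ≤ |a - b| := by
  have hmax : |max (q / 2) a - max (q / 2) b| ≤ |a - b| := by
    simpa only [max_comm (q / 2)] using abs_max_sub_max_le_abs a b (q / 2)
  simpa only [kappa, sub_self, abs_zero, max_eq_right (abs_nonneg (a - b))] using
    (abs_min_sub_min_le_max q (max (q / 2) a) q (max (q / 2) b)).trans (max_le_max le_rfl hmax)

lemma kappa_sub_kappa_sq_le (q a b : ℝ) : (kappa q a - kappa q b) ^ 2 ≤ (a - b) ^ 2 :=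
  sq_le_sq.mpr (abs_kappa_sub_kappa_le q a b)

lemma kappa_eq_kappa_of_notMem_Ioc {q a b : ℝ} (ha : 0 ≤ a) (hab : a ≤ b)
    (hq : q ∉ Ioc a (2 * b)) : kappa q a = kappa q b := by
  rcases le_or_gt q a with hqa | hqa
  · rw [kappa_of_le hqa, kappa_of_le (hqa.trans hab)]
  · have hbq : 2 * b ≤ q := (not_le.mp fun h => hq ⟨hqa, h⟩).le
    rw [kappa_of_two_mul_le ha (by linarith), kappa_of_two_mul_le (ha.trans hab) hbq]

@[fun_prop]
lemma continuous_kappa_left (y : ℝ) : Continuous fun q => kappa q y := by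
  unfold kappa
  fun_prop

lemma integral_Ioc_const_div {s t : ℝ} (hs : 0 < s) (hst : s ≤ t) (M : ℝ) :
    ∫ q in Ioc s t, M / q = M * Real.log (t / s) := by
  rw [← intervalIntegral.integral_of_le hst]
  simp only [div_eq_mul_inv, intervalIntegral.integral_const_mul,
    integral_inv_of_pos hs (hs.trans_le hst)]

lemma setIntegral_Ioc_div_le {g : ℝ → ℝ} {s t M : ℝ} (hs : 0 < s) (hst : s ≤ t)
    (hg : ContinuousOn g (Icc s t)) (hgM : ∀ q ∈ Ioc s t, g q ≤ M) :
    ∫ q in Ioc s t, g q / q ≤ M * Real.log (t / s) := by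
  have hpos : ∀ q ∈ Icc s t, q ≠ 0 := fun q hq => (hs.trans_le hq.1).ne'
  have hint : ∀ {h : ℝ → ℝ}, ContinuousOn h (Icc s t) → IntegrableOn (fun q => h q / q) (Ioc s t) :=
    fun hh => ((hh.div continuousOn_id hpos).integrableOn_Icc).mono_set Ioc_subset_Icc_self
  rw [← integral_Ioc_const_div hs hst]
  refine setIntegral_mono_on (hint hg) (hint continuousOn_const) measurableSet_Ioc fun q hq => ?_
  exact div_le_div_of_nonneg_right (hgM q hq) (hs.trans hq.1).le

theorem kappa_integral_case_middle (a b : ℝ) (ha : 0 < a) (hab : a ≤ b) (hb : b ≤ 2 * a) :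
    (∫ q in Set.Ioi (0 : ℝ), (kappa q a - kappa q b) ^ 2 / q) ≤ (a - b) ^ 2 * Real.log 4 := by
  have h2b : a ≤ 2 * b := by linarith
  have hsupport : Ioc a (2 * b) ⊆ Ioi 0 := fun q hq => ha.trans hq.1
  calc (∫ q in Ioi 0, (kappa q a - kappa q b) ^ 2 / q)
      = ∫ q in Ioc a (2 * b), (kappa q a - kappa q b) ^ 2 / q := by
        refine setIntegral_eq_of_subset_of_forall_sdiff_eq_zero measurableSet_Ioi hsupport ?_
        rintro q ⟨-, hq⟩
        rw [kappa_eq_kappa_of_notMem_Ioc ha.le hab hq, sub_self, zero_pow two_ne_zero, zero_div]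
    _ ≤ (a - b) ^ 2 * Real.log (2 * b / a) :=
        setIntegral_Ioc_div_le ha h2b (by fun_prop) fun q _ => kappa_sub_kappa_sq_le q a b
    _ ≤ (a - b) ^ 2 * Real.log 4 := by
        gcongr
        · exact div_pos (by linarith) ha
        · rw [div_le_iff₀ ha]
          linarith
end

section
/- Let $L$ be the Laplacian of a connected weighted graph $H$ on vertex set $V$ with $|V| \ge 2$, and let $X \subsetneq V$ be nonempty. Then the Schur complement $L[X,X] - L[X, V \setminus X]\, L[V\setminus X, V\setminus X]^{-1}\, L[V\setminus X, X]$ is itself the Laplacian matrix of a weighted graph on $X$ with nonnegative edge weights; i.e., it is symmetric, has zero row sums, and has nonpositive off-diagonal entries. -/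
open Matrix MeasureTheory
open scoped Classical

/-- The (weighted) Laplacian matrix of the weighted graph on `V` with weights `c`. -/
noncomputable def lapl {V : Type*} [Fintype V] [DecidableEq V] (c : V → V → ℝ) :
    Matrix V V ℝ :=
  fun u v => if u = v then ∑ w, c u w else -c u v

/-- The graph described by `L` is connected: the kernel of `L` consists of constants. -/
def LapConnected {V : Type*} [Fintype V] (L : Matrix V V ℝ) : Prop :=
  ∀ x : V → ℝ, L *ᵥ x = 0 → ∃ k : ℝ, ∀ v, x v = k

/-- The Schur complement of `L` onto the rows and columns indexed by `S`,
eliminating the vertices outside of `S`. -/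
noncomputable def schur {V : Type*} [Fintype V] [DecidableEq V]
    (L : Matrix V V ℝ) (S : Set V) : Matrix S S ℝ :=
  (Matrix.of fun i j : S => L i.1 j.1)
    - (Matrix.of fun (i : S) (j : {v : V // v ∉ S}) => L i.1 j.1)
        * (Matrix.of fun i j : {v : V // v ∉ S} => L i.1 j.1)⁻¹
        * (Matrix.of fun (i : {v : V // v ∉ S}) (j : S) => L i.1 j.1)

/-- `B` is the Moore–Penrose pseudoinverse of `A`. -/
def IsMPInv {n : Type*} [Fintype n] (A B : Matrix n n ℝ) : Prop :=
  A * B * A = A ∧ B * A * B = B ∧ (A * B)ᵀ = A * B ∧ (B * A)ᵀ = B * A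

/-!
Write `L = [[A, B], [Bᵀ, C]]` with `C` the block on `V \ X`. Symmetry and the zero row sums
`A 1 + B 1 = 0`, `Bᵀ 1 + C 1 = 0` pass to `A - B C⁻¹ Bᵀ` by pure algebra once `C` is invertible.
Off the diagonal `A` and `B` are nonpositive, so the correction `B C⁻¹ Bᵀ` is entrywise
nonnegative as soon as `C⁻¹ ≥ 0`. Invertibility and `C⁻¹ ≥ 0` both follow from `C x ≥ 0 ⇒ x ≥ 0`,
which is the discrete minimum principle for a connected graph with nonempty boundary `X`.
-/

/-- Monotone matrices in the sense of Collatz. -/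
def IsMonotoneMatrix {n : Type*} [Fintype n] (M : Matrix n n ℝ) : Prop :=
  ∀ x : n → ℝ, 0 ≤ M *ᵥ x → 0 ≤ x

namespace IsMonotoneMatrix

variable {n : Type*} [Fintype n] [DecidableEq n] {M : Matrix n n ℝ}

theorem isUnit_det (hM : IsMonotoneMatrix M) : IsUnit M.det := by
  rw [isUnit_iff_ne_zero]
  intro hdet
  obtain ⟨x, hx0, hx⟩ := exists_mulVec_eq_zero_iff.mpr hdet
  have hpos : 0 ≤ x := hM x hx.ge
  have hneg : 0 ≤ -x := hM (-x) (by rw [mulVec_neg, hx, neg_zero])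
  exact hx0 (le_antisymm (neg_nonneg.mp hneg) hpos)

theorem inv_apply_nonneg (hM : IsMonotoneMatrix M) (k l : n) : 0 ≤ M⁻¹ k l := by
  have hcol : M *ᵥ (M⁻¹ *ᵥ Pi.single l 1) = Pi.single l 1 := by
    rw [mulVec_mulVec, mul_nonsing_inv _ hM.isUnit_det, one_mulVec]
  have := hM _ (hcol ▸ Pi.single_nonneg.mpr zero_le_one) k
  simpa [mulVec_single] using this

end IsMonotoneMatrix

theorem submatrix_mulVec_one_add {V ι : Type*} [Fintype V] (L : Matrix V V ℝ) (S : Set V)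
    (f : ι → V) :
    L.submatrix f ((↑) : S → V) *ᵥ 1 + L.submatrix f ((↑) : {v // v ∉ S} → V) *ᵥ 1 =
      fun i => (L *ᵥ 1) (f i) := by
  funext i
  simp only [Pi.add_apply, mulVec, dotProduct_one, submatrix_apply]
  exact Fintype.sum_subtype_add_sum_subtype (· ∈ S) (L (f i))

section SchurComplement

variable {V : Type*} [Fintype V] [DecidableEq V] (L : Matrix V V ℝ) (S : Set V)

theorem schur_eq : schur L S =
    L.submatrix (↑) (↑) - L.submatrix (↑) ((↑) : {v // v ∉ S} → V) *
      (L.submatrix (↑) (↑) : Matrix {v // v ∉ S} {v // v ∉ S} ℝ)⁻¹ *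
      L.submatrix ((↑) : {v // v ∉ S} → V) (↑) :=
  rfl

theorem schur_transpose (hL : Lᵀ = L) : (schur L S)ᵀ = schur L S := by
  simp only [schur_eq, transpose_sub, transpose_mul, transpose_submatrix, transpose_nonsing_inv,
    hL, Matrix.mul_assoc]

variable {L}

theorem schur_mulVec_one (hL : L *ᵥ 1 = 0)
    (hC : IsUnit (L.submatrix (↑) (↑) : Matrix {v // v ∉ S} {v // v ∉ S} ℝ).det) :
    schur L S *ᵥ 1 = 0 := by
  have hS := submatrix_mulVec_one_add L S ((↑) : S → V)
  have hSc := submatrix_mulVec_one_add L S ((↑) : {v // v ∉ S} → V)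
  simp only [hL, Pi.zero_apply] at hS hSc
  have hCinvB : (L.submatrix (↑) (↑) : Matrix {v // v ∉ S} {v // v ∉ S} ℝ)⁻¹ *ᵥ
      (L.submatrix (↑) ((↑) : S → V) *ᵥ 1) = -1 := by
    rw [eq_neg_of_add_eq_zero_left hSc, mulVec_neg, mulVec_mulVec, nonsing_inv_mul _ hC,
      one_mulVec]
  rw [schur_eq, sub_mulVec, ← mulVec_mulVec, ← mulVec_mulVec, hCinvB, mulVec_neg, sub_neg_eq_add]
  exact hS

theorem schur_apply_nonpos (hoff : ∀ u v, u ≠ v → L u v ≤ 0)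
    (hC : ∀ k l, 0 ≤ (L.submatrix (↑) (↑) : Matrix {v // v ∉ S} {v // v ∉ S} ℝ)⁻¹ k l)
    {i j : S} (hij : i ≠ j) : schur L S i j ≤ 0 := by
  have hne : ∀ (u : S) (w : {v // v ∉ S}), (u : V) ≠ w := fun u w h => w.2 (h ▸ u.2)
  have hcorr : 0 ≤ (L.submatrix (↑) ((↑) : {v // v ∉ S} → V) *
      (L.submatrix (↑) (↑) : Matrix {v // v ∉ S} {v // v ∉ S} ℝ)⁻¹ *
      L.submatrix ((↑) : {v // v ∉ S} → V) (↑)) i j := by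
    refine Finset.sum_nonneg fun l _ => mul_nonneg_of_nonpos_of_nonpos ?_ ?_
    · exact Finset.sum_nonpos fun k _ => mul_nonpos_of_nonpos_of_nonneg
        (hoff _ _ (hne i k)) (hC k l)
    · exact hoff _ _ (hne j l).symm
  have hdirect : L i j ≤ 0 := hoff _ _ (Subtype.coe_ne_coe.mpr hij)
  rw [schur_eq, Matrix.sub_apply]
  exact sub_nonpos_of_le (hdirect.trans hcorr)

end SchurComplement

theorem mulVec_extendByZero_apply {m V : Type*} [Fintype V] (M : Matrix m V ℝ) (X : Set V)
    (x : {v // v ∉ X} → ℝ) (i : m) :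
    (M *ᵥ fun v => if h : v ∈ X then 0 else x ⟨v, h⟩) i = (M.submatrix id (↑) *ᵥ x) i := by
  simp only [mulVec, dotProduct, ← Fintype.sum_subtype_add_sum_subtype (· ∈ X)]
  simp only [Subtype.coe_prop, dite_true, mul_zero, Finset.sum_const_zero, zero_add]
  exact Finset.sum_congr rfl fun w _ => by simp [w.2]

section Laplacian

variable {V : Type*} [Fintype V] [DecidableEq V] {c : V → V → ℝ}

theorem lapl_apply_of_ne {u v : V} (h : u ≠ v) : lapl c u v = -c u v := if_neg h

theorem lapl_transpose (hsymm : ∀ u v, c u v = c v u) : (lapl c)ᵀ = lapl c := by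
  ext u v
  by_cases h : u = v
  · subst h; rfl
  · rw [transpose_apply, lapl_apply_of_ne (Ne.symm h), lapl_apply_of_ne h, hsymm]

theorem lapl_apply_nonpos (hnonneg : ∀ u v, 0 ≤ c u v) {u v : V} (h : u ≠ v) :
    lapl c u v ≤ 0 := by
  rw [lapl_apply_of_ne h, neg_nonpos]
  exact hnonneg u v

theorem lapl_mulVec_apply (hdiag : ∀ v, c v v = 0) (x : V → ℝ) (u : V) :
    (lapl c *ᵥ x) u = ∑ w, c u w * (x u - x w) := by
  have hentry : ∀ w, lapl c u w = (if u = w then ∑ w', c u w' else 0) - c u w := by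
    intro w
    by_cases h : u = w
    · subst h; simp [lapl, hdiag]
    · simp [lapl, h]
  simp only [mulVec, dotProduct, hentry, sub_mul, ite_mul, zero_mul, Finset.sum_sub_distrib,
    Finset.sum_ite_eq, Finset.mem_univ, if_true, mul_sub, Finset.sum_mul]

theorem lapl_mulVec_one (hdiag : ∀ v, c v v = 0) : lapl c *ᵥ 1 = 0 :=
  funext fun u => by simp [lapl_mulVec_apply hdiag]

theorem LapConnected.eq_empty_or_eq_univ (hconn : LapConnected (lapl c))
    (hsymm : ∀ u v, c u v = c v u) (hdiag : ∀ v, c v v = 0) {S : Set V}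
    (hS : ∀ u ∈ S, ∀ v ∉ S, c u v = 0) : S = ∅ ∨ S = Set.univ := by
  obtain ⟨k, hk⟩ := hconn (S.indicator 1) <| funext fun u => by
    rw [lapl_mulVec_apply hdiag, Pi.zero_apply]
    refine Finset.sum_eq_zero fun w _ => ?_
    by_cases hu : u ∈ S <;> by_cases hw : w ∈ S
    · simp [hu, hw]
    · simp [hS u hu w hw]
    · simp [hsymm u w, hS w hw u hu]
    · simp [hu, hw]
  refine S.eq_empty_or_nonempty.imp id fun ⟨u, hu⟩ => Set.eq_univ_of_forall fun v => ?_
  by_contra hv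
  simpa [hu, hv] using (hk u).trans (hk v).symm

/-- The discrete minimum principle: the set where `z` attains a negative minimum has no edge
leaving it, so by connectivity it would be all of `V`, contradicting `z = 0` on `X`. -/
theorem lapl_nonneg_of_mulVec_nonneg (hsymm : ∀ u v, c u v = c v u)
    (hnonneg : ∀ u v, 0 ≤ c u v) (hdiag : ∀ v, c v v = 0) (hconn : LapConnected (lapl c))
    {X : Set V} (hX : X.Nonempty) {z : V → ℝ} (hzX : ∀ v ∈ X, z v = 0)
    (hLz : ∀ u ∉ X, 0 ≤ (lapl c *ᵥ z) u) : 0 ≤ z := by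
  have : Nonempty V := hX.to_subtype.map Subtype.val
  obtain ⟨u₀, -, hmin⟩ := Finset.exists_min_image Finset.univ z Finset.univ_nonempty
  by_contra hneg
  have hm : z u₀ < 0 := by
    obtain ⟨v, hv⟩ : ∃ v, z v < 0 := by simpa [Pi.le_def] using hneg
    exact (hmin v (Finset.mem_univ v)).trans_lt hv
  set S := {v | z v = z u₀} with hSdef
  have hSX : ∀ u ∈ S, u ∉ X := fun u hu huX => by
    rw [hSdef, Set.mem_ofPred_eq, hzX u huX] at hu
    linarith
  have hcut : ∀ u ∈ S, ∀ w ∉ S, c u w = 0 := by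
    intro u hu w hw
    have hterm : ∀ w', c u w' * (z u - z w') ≤ 0 := fun w' =>
      mul_nonpos_of_nonneg_of_nonpos (hnonneg u w') (by
        rw [show z u = z u₀ from hu]; linarith [hmin w' (Finset.mem_univ w')])
    have hsum : ∑ w', c u w' * (z u - z w') = 0 :=
      le_antisymm (Finset.sum_nonpos fun w' _ => hterm w')
        (lapl_mulVec_apply hdiag z u ▸ hLz u (hSX u hu))
    refine (mul_eq_zero.mp ((Finset.sum_eq_zero_iff_of_nonpos fun w' _ => hterm w').mp hsum w
      (Finset.mem_univ w))).resolve_right fun h => hw ?_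
    show z w = z u₀
    rw [← show z u = z u₀ from hu]
    linarith
  rcases hconn.eq_empty_or_eq_univ hsymm hdiag hcut with h | h
  · exact Set.eq_empty_iff_forall_notMem.mp h u₀ rfl
  · obtain ⟨v, hv⟩ := hX
    exact hSX v (h ▸ Set.mem_univ v) hv

theorem isMonotoneMatrix_lapl_submatrix (hsymm : ∀ u v, c u v = c v u)
    (hnonneg : ∀ u v, 0 ≤ c u v) (hdiag : ∀ v, c v v = 0) (hconn : LapConnected (lapl c))
    {X : Set V} (hX : X.Nonempty) :
    IsMonotoneMatrix ((lapl c).submatrix (↑) (↑) : Matrix {v // v ∉ X} {v // v ∉ X} ℝ) := by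
  intro x hx
  have hz := lapl_nonneg_of_mulVec_nonneg hsymm hnonneg hdiag hconn hX
    (z := fun v => if h : v ∈ X then 0 else x ⟨v, h⟩) (fun v hv => dif_pos hv)
    fun u hu => (mulVec_extendByZero_apply _ X x u).symm ▸ hx ⟨u, hu⟩
  intro v
  simpa [dif_neg v.2] using hz v

end Laplacian

theorem schur_is_laplacian_general {V : Type*} [Fintype V] [DecidableEq V]
    (c : V → V → ℝ) (hsymm : ∀ u v, c u v = c v u) (hnonneg : ∀ u v, 0 ≤ c u v)
    (hdiag : ∀ v, c v v = 0) (hconn : LapConnected (lapl c))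
    (X : Set V) (hne : X.Nonempty) :
    (schur (lapl c) X)ᵀ = schur (lapl c) X ∧
    (∀ i : X, ∑ j : X, schur (lapl c) X i j = 0) ∧
    (∀ i j : X, i ≠ j → schur (lapl c) X i j ≤ 0) := by
  have hC := isMonotoneMatrix_lapl_submatrix hsymm hnonneg hdiag hconn hne
  refine ⟨schur_transpose _ X (lapl_transpose hsymm), fun i => ?_,
    fun i j => schur_apply_nonpos X (fun u v => lapl_apply_nonpos hnonneg) hC.inv_apply_nonneg⟩
  have hrow := congrFun (schur_mulVec_one X (lapl_mulVec_one hdiag) hC.isUnit_det) i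
  rwa [mulVec, dotProduct_one] at hrow

/-- The Schur complement of a connected graph Laplacian is itself a graph Laplacian:
it is symmetric, has zero row sums, and has nonpositive off-diagonal entries. -/
theorem schur_is_laplacian {V : Type*} [Fintype V] [DecidableEq V]
    (c : V → V → ℝ) (hsymm : ∀ u v, c u v = c v u) (hnonneg : ∀ u v, 0 ≤ c u v)
    (hdiag : ∀ v, c v v = 0) (hconn : LapConnected (lapl c))
    (hcard : 2 ≤ Fintype.card V)
    (X : Set V) (hne : X.Nonempty) (hproper : X ≠ Set.univ) :
    (schur (lapl c) X)ᵀ = schur (lapl c) X ∧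
    (∀ i : X, ∑ j : X, schur (lapl c) X i j = 0) ∧
    (∀ i j : X, i ≠ j → schur (lapl c) X i j ≤ 0) :=
  schur_is_laplacian_general c hsymm hnonneg hdiag hconn X hne
end

section
/- Monotonicity of volume under Schur complementation: for a connected weighted graph $H$ and sets $X \subseteq Y \subseteq V(H)$ with $Y$ nonempty and $Y \ne V(H)$ allowed to be proper, letting $I := \mathtt{Schur}(H, Y)$, one has $\mathrm{vol}_I(X) \le \mathrm{vol}_H(X)$, where $\mathrm{vol}$ denotes the sum of weighted degrees of vertices in the set. -/
open Matrix MeasureTheory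
open scoped Classical

section Aux

variable {V : Type*} [Fintype V] [DecidableEq V]

lemma lapl_apply (c : V → V → ℝ) (hdiag : ∀ v, c v v = 0) (u v : V) :
    lapl c u v = (if u = v then ∑ w, c u w else 0) - c u v := by
  unfold lapl
  by_cases h : u = v
  · subst h; simp [hdiag u]
  · simp [h]

lemma lapl_symm (c : V → V → ℝ) (hsymm : ∀ u v, c u v = c v u) (u v : V) :
    lapl c u v = lapl c v u := by
  unfold lapl
  by_cases h : u = v
  · subst h; simp
  · simp [h, Ne.symm h, hsymm u v]

lemma lapl_rowsum (c : V → V → ℝ) (hdiag : ∀ v, c v v = 0) (u : V) :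
    ∑ v, lapl c u v = 0 := by
  simp only [lapl_apply c hdiag]
  rw [Finset.sum_sub_distrib, Finset.sum_ite_eq Finset.univ u]
  simp

lemma lapl_quad (c : V → V → ℝ) (hsymm : ∀ u v, c u v = c v u)
    (hdiag : ∀ v, c v v = 0) (x : V → ℝ) :
    2 * (x ⬝ᵥ (lapl c *ᵥ x)) = ∑ u, ∑ v, c u v * (x u - x v)^2 := by
  have h1 : x ⬝ᵥ (lapl c *ᵥ x) = ∑ u, ∑ v, c u v * (x u ^ 2 - x u * x v) := by
    simp only [dotProduct, mulVec, dotProduct, lapl_apply c hdiag, Finset.mul_sum]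
    refine Finset.sum_congr rfl fun u _ => ?_
    have step : ∀ v : V, x u * (((if u = v then ∑ w, c u w else 0) - c u v) * x v)
        = (if u = v then (∑ w, c u w) * (x u * x v) else 0) - c u v * (x u * x v) := by
      intro v
      by_cases h : u = v <;> simp [h] <;> ring
    rw [Finset.sum_congr rfl fun v _ => step v, Finset.sum_sub_distrib,
      Finset.sum_ite_eq Finset.univ u]
    simp only [Finset.mem_univ, if_true, Finset.sum_mul]
    rw [← Finset.sum_sub_distrib]
    refine Finset.sum_congr rfl fun v _ => ?_
    ring
  have h2 : x ⬝ᵥ (lapl c *ᵥ x) = ∑ u, ∑ v, c u v * (x v ^ 2 - x v * x u) := by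
    rw [h1, Finset.sum_comm]
    exact Finset.sum_congr rfl fun u _ => Finset.sum_congr rfl fun v _ => by
      rw [hsymm u v]
  calc 2 * (x ⬝ᵥ (lapl c *ᵥ x))
      = (∑ u, ∑ v, c u v * (x u ^ 2 - x u * x v))
        + ∑ u, ∑ v, c u v * (x v ^ 2 - x v * x u) := by rw [← h1, ← h2]; ring
    _ = ∑ u, ∑ v, c u v * (x u - x v)^2 := by
        rw [← Finset.sum_add_distrib]
        refine Finset.sum_congr rfl fun u _ => ?_
        rw [← Finset.sum_add_distrib]
        exact Finset.sum_congr rfl fun v _ => by ring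

lemma lapl_posSemidef (c : V → V → ℝ) (hsymm : ∀ u v, c u v = c v u)
    (hnonneg : ∀ u v, 0 ≤ c u v) (hdiag : ∀ v, c v v = 0) :
    (lapl c).PosSemidef := by
  apply Matrix.PosSemidef.of_dotProduct_mulVec_nonneg
  · exact Matrix.ext fun u v => by
      simp only [conjTranspose_apply, star_trivial]
      exact lapl_symm c hsymm v u
  · intro x
    rw [star_trivial]
    have h := lapl_quad c hsymm hdiag x
    have hnn : 0 ≤ ∑ u, ∑ v, c u v * (x u - x v)^2 :=
      Finset.sum_nonneg fun u _ => Finset.sum_nonneg fun v _ =>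
        mul_nonneg (hnonneg u v) (sq_nonneg _)
    linarith

lemma block_posDef (c : V → V → ℝ) (hsymm : ∀ u v, c u v = c v u)
    (hnonneg : ∀ u v, 0 ≤ c u v) (hdiag : ∀ v, c v v = 0)
    (hconn : LapConnected (lapl c)) (Y : Set V) (hY : Y.Nonempty) :
    (Matrix.of fun i j : {v : V // v ∉ Y} => lapl c i.1 j.1).PosDef := by
  have hpsd := lapl_posSemidef c hsymm hnonneg hdiag
  apply Matrix.PosDef.of_dotProduct_mulVec_pos
  · exact Matrix.ext fun i j => by
      simp only [conjTranspose_apply, star_trivial, of_apply]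
      exact lapl_symm c hsymm j.1 i.1
  · intro x hx
    set y : V → ℝ := fun v => if h : v ∉ Y then x ⟨v, h⟩ else 0 with hy
    have hyz : ∀ j : {v : V // v ∉ Y}, y j.1 = x j := fun j => dif_pos j.2
    have hyY : ∀ v : V, v ∈ Y → y v = 0 := fun v hv => dif_neg (by simpa using hv)
    have hinner : ∀ u : V, (∑ v, lapl c u v * y v)
        = ∑ j : {v : V // v ∉ Y}, lapl c u j.1 * x j := by
      intro u
      rw [← Fintype.sum_subtype_add_sum_subtype (fun v => v ∉ Y)
        (fun v => lapl c u v * y v)]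
      have h2 : (∑ j : {v : V // ¬ v ∉ Y}, lapl c u j.1 * y j.1) = 0 :=
        Finset.sum_eq_zero fun j _ => by
          rw [hyY j.1 (not_not.mp j.2), mul_zero]
      rw [h2, add_zero]
      exact Finset.sum_congr rfl fun j _ => by rw [hyz j]
    have hxy : x ⬝ᵥ ((Matrix.of fun i j : {v : V // v ∉ Y} => lapl c i.1 j.1) *ᵥ x)
        = y ⬝ᵥ (lapl c *ᵥ y) := by
      simp only [dotProduct, mulVec, dotProduct, of_apply]
      rw [← Fintype.sum_subtype_add_sum_subtype (fun v => v ∉ Y)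
        (fun u => y u * ∑ v, lapl c u v * y v)]
      have h2 : (∑ j : {v : V // ¬ v ∉ Y}, y j.1 * ∑ v, lapl c j.1 v * y v) = 0 :=
        Finset.sum_eq_zero fun j _ => by rw [hyY j.1 (not_not.mp j.2), zero_mul]
      rw [h2, add_zero]
      exact (Finset.sum_congr rfl fun i _ => by rw [hyz i, hinner i.1]).symm
    have hynn : 0 ≤ y ⬝ᵥ (lapl c *ᵥ y) := by
      have := hpsd.dotProduct_mulVec_nonneg y; rwa [star_trivial] at this
    rw [star_trivial, hxy]
    rcases lt_or_eq_of_le hynn with h | h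
    · exact h
    · exfalso
      have h0 : lapl c *ᵥ y = 0 := by
        rw [← hpsd.dotProduct_mulVec_zero_iff y, star_trivial]; exact h.symm
      obtain ⟨k, hk⟩ := hconn y h0
      have hk0 : k = 0 := by
        obtain ⟨v, hv⟩ := hY
        rw [← hk v, hyY v hv]
      apply hx
      funext j
      rw [← hyz j, hk j.1, hk0]; rfl

end Aux

/-- Monotonicity of volume under Schur complementation: for `X ⊆ Y`, the total
weighted degree of the vertices of `X` in `Schur(H, Y)` is at most their total
weighted degree in `H`. -/
theorem vol_schur_le {V : Type*} [Fintype V] [DecidableEq V]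
    (c : V → V → ℝ) (hsymm : ∀ u v, c u v = c v u) (hnonneg : ∀ u v, 0 ≤ c u v)
    (hdiag : ∀ v, c v v = 0) (hconn : LapConnected (lapl c))
    (X Y : Set V) (hXY : X ⊆ Y) (hY : Y.Nonempty) :
    (∑ i : Y, if i.1 ∈ X then
        (∑ j : Y, if j ≠ i then -(schur (lapl c) Y i j) else 0) else 0)
      ≤ ∑ v : V, if v ∈ X then (∑ u : V, c v u) else 0 := by
  set L := lapl c with hL
  set Z := {v : V // v ∉ Y}
  set A : Matrix Z Z ℝ := Matrix.of fun i j : Z => L i.1 j.1 with hA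
  set B : Matrix Y Z ℝ := Matrix.of fun (i : Y) (j : Z) => L i.1 j.1 with hB
  set C : Matrix Z Y ℝ := Matrix.of fun (i : Z) (j : Y) => L i.1 j.1 with hC
  have hApd : A.PosDef := block_posDef c hsymm hnonneg hdiag hconn Y hY
  have hAdet : IsUnit A.det := hApd.det_pos.ne'.isUnit
  have hAinv : A⁻¹ * A = 1 := Matrix.nonsing_inv_mul A hAdet
  have hAinvPsd : (A⁻¹).PosSemidef := hApd.inv.posSemidef
  have hSdef : schur L Y = (Matrix.of fun i j : Y => L i.1 j.1) - B * A⁻¹ * C := rfl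
  -- Row sums of the schur complement vanish
  have hsplit : ∀ u : V, (∑ j : Y, L u j.1) + (∑ k : Z, L u k.1) = 0 := by
    intro u
    rw [← lapl_rowsum c hdiag u]
    exact Fintype.sum_subtype_add_sum_subtype (fun v => v ∈ Y) (fun v => L u v)
  have hrow : ∀ i : Y, ∑ j : Y, schur L Y i j = 0 := by
    intro i
    have hBAC : ∑ j : Y, (B * A⁻¹ * C) i j = - ∑ k : Z, B i k := by
      calc ∑ j : Y, (B * A⁻¹ * C) i j
          = ∑ k : Z, (B * A⁻¹) i k * (∑ j : Y, C k j) := by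
            simp only [Matrix.mul_apply]
            rw [Finset.sum_comm]
            exact Finset.sum_congr rfl fun k _ => by rw [Finset.mul_sum]
        _ = ∑ k : Z, (B * A⁻¹) i k * (- ∑ k' : Z, A k k') := by
            refine Finset.sum_congr rfl fun k _ => ?_
            congr 1
            have h := hsplit k.1
            simp only [hC, hA, Matrix.of_apply]
            linarith
        _ = ∑ k : Z, ∑ k' : Z, -((B * A⁻¹) i k * A k k') := by
            refine Finset.sum_congr rfl fun k _ => ?_
            rw [mul_neg, Finset.mul_sum, Finset.sum_neg_distrib]
        _ = ∑ k' : Z, ∑ k : Z, -((B * A⁻¹) i k * A k k') := Finset.sum_comm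
        _ = - ∑ k' : Z, (B * A⁻¹ * A) i k' := by
            rw [← Finset.sum_neg_distrib]
            refine Finset.sum_congr rfl fun k' _ => ?_
            rw [Matrix.mul_apply, Finset.sum_neg_distrib]
        _ = - ∑ k' : Z, B i k' := by rw [Matrix.mul_assoc, hAinv, Matrix.mul_one]
    rw [hSdef]
    simp only [Matrix.sub_apply, Finset.sum_sub_distrib, hBAC, Matrix.of_apply]
    have := hsplit i.1
    simp only [hB, Matrix.of_apply] at *
    linarith
  -- inner sum is the diagonal
  have hinner : ∀ i : Y, (∑ j : Y, if j ≠ i then -(schur L Y i j) else 0)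
      = schur L Y i i := by
    intro i
    have step : ∀ j : Y, (if j ≠ i then -(schur L Y i j) else 0)
        = -(schur L Y i j) + (if j = i then schur L Y i j else 0) := by
      intro j; by_cases h : j = i <;> simp [h]
    rw [Finset.sum_congr rfl fun j _ => step j, Finset.sum_add_distrib,
      Finset.sum_neg_distrib, hrow i, neg_zero, zero_add,
      Finset.sum_ite_eq' Finset.univ i]
    simp
  -- diagonal inequality
  have hdiagle : ∀ i : Y, schur L Y i i ≤ L i.1 i.1 := by
    intro i
    set u : Z → ℝ := fun j => L i.1 j.1 with hu
    have hBAC : (B * A⁻¹ * C) i i = u ⬝ᵥ (A⁻¹ *ᵥ u) := by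
      simp only [Matrix.mul_apply, dotProduct, mulVec, dotProduct,
        Finset.sum_mul, Finset.mul_sum]
      rw [Finset.sum_comm]
      refine Finset.sum_congr rfl fun j _ => ?_
      refine Finset.sum_congr rfl fun k _ => ?_
      simp only [hB, hC, hA, hu, Matrix.of_apply]
      rw [show L k.1 i.1 = L i.1 k.1 from lapl_symm c hsymm k.1 i.1]
      ring
    have hnn : 0 ≤ u ⬝ᵥ (A⁻¹ *ᵥ u) := by
      have := hAinvPsd.dotProduct_mulVec_nonneg u; rwa [star_trivial] at this
    rw [hSdef]
    simp only [Matrix.sub_apply, Matrix.of_apply, hBAC]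
    linarith
  -- assemble
  calc (∑ i : Y, if i.1 ∈ X then
        (∑ j : Y, if j ≠ i then -(schur L Y i j) else 0) else 0)
      = ∑ i : Y, (if i.1 ∈ X then schur L Y i i else 0) := by
        refine Finset.sum_congr rfl fun i _ => ?_
        by_cases h : i.1 ∈ X
        · rw [if_pos h, if_pos h, hinner i]
        · rw [if_neg h, if_neg h]
    _ ≤ ∑ i : Y, (if i.1 ∈ X then L i.1 i.1 else 0) := by
        refine Finset.sum_le_sum fun i _ => ?_
        by_cases h : i.1 ∈ X <;> simp [h, hdiagle i]
    _ = ∑ v : V, if v ∈ X then (∑ u : V, c v u) else 0 := by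
        rw [← Fintype.sum_subtype_add_sum_subtype (fun v => v ∈ Y)
          (fun v => if v ∈ X then (∑ u : V, c v u) else 0)]
        have h2 : (∑ k : {v : V // ¬ v ∈ Y}, if k.1 ∈ X then (∑ u : V, c k.1 u) else 0) = 0 :=
          Finset.sum_eq_zero fun k _ => by
            rw [if_neg (fun hx => k.2 (hXY hx))]
        rw [h2, add_zero]
        refine Finset.sum_congr rfl fun i _ => ?_
        by_cases h : i.1 ∈ X <;> simp [h, hL, lapl]
end

section
/- Let $G$ be a connected weighted graph, $y \in \mathbb{R}^{V(G)}$, $q > 0$, and set $S_{\ge q} = \{v : y_v \ge q\}$, $S_{\le q/2} = \{v : y_v \le q/2\}$ (assume both nonempty). Let $I_q := \mathtt{Schur}(G, S_{\ge q} \cup S_{\le q/2})$. Then $c^{I_q}(S_{\le q/2}, S_{\ge q}) \le \frac{4}{q^2} \sum_{uv \in E(G)} c_{uv}^G (\kappa_q(y_u) - \kappa_q(y_v))^2$, where $\kappa_q(y) := \min(q, \max(q/2, y))$. -/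
open Matrix MeasureTheory
open scoped Classical

section Aux

variable {V : Type*} [Fintype V] [DecidableEq V]

lemma lapl_mulVec (c : V → V → ℝ) (hdiag : ∀ v, c v v = 0) (p : V → ℝ) (u : V) :
    (lapl c *ᵥ p) u = ∑ v, c u v * (p u - p v) := by
  have h : ∀ v : V, (if u = v then ∑ w, c u w else -c u v) * p v
      = (if u = v then (∑ w, c u w) * p v + c u v * p v else 0) + (-(c u v) * p v) := by
    intro v
    by_cases hv : u = v
    · subst hv; simp [hdiag u]
    · simp [hv]
  simp only [Matrix.mulVec, dotProduct, lapl]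
  rw [Finset.sum_congr rfl (fun v _ => h v), Finset.sum_add_distrib, Finset.sum_ite_eq]
  simp only [Finset.mem_univ, if_true, hdiag u, mul_zero, add_zero, zero_mul]
  rw [Finset.sum_mul]
  rw [← Finset.sum_add_distrib]
  apply Finset.sum_congr rfl
  intro v _
  ring

lemma lapl_quadform (c : V → V → ℝ) (hsymm : ∀ u v, c u v = c v u)
    (hdiag : ∀ v, c v v = 0) (p : V → ℝ) :
    p ⬝ᵥ (lapl c *ᵥ p) = (∑ u, ∑ v, c u v * (p u - p v) ^ 2) / 2 := by
  have h : p ⬝ᵥ (lapl c *ᵥ p) = ∑ u, ∑ v, c u v * (p u * (p u - p v)) := by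
    simp only [dotProduct, lapl_mulVec c hdiag p, Finset.mul_sum]
    exact Finset.sum_congr rfl fun u _ => Finset.sum_congr rfl fun v _ => by ring
  have h2 : p ⬝ᵥ (lapl c *ᵥ p) = ∑ u, ∑ v, c u v * (p v * (p v - p u)) := by
    rw [h, Finset.sum_comm]
    exact Finset.sum_congr rfl fun u _ => Finset.sum_congr rfl fun v _ => by
      rw [hsymm v u]
  have key := congrArg₂ (· + ·) h h2
  rw [← Finset.sum_add_distrib] at key
  simp only [← Finset.sum_add_distrib] at key
  have h3 : ∑ u, ∑ v, (c u v * (p u * (p u - p v)) + c u v * (p v * (p v - p u)))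
      = ∑ u, ∑ v, c u v * (p u - p v) ^ 2 :=
    Finset.sum_congr rfl fun u _ => Finset.sum_congr rfl fun v _ => by ring
  rw [h3] at key
  linarith

lemma lapl_quadform_nonneg (c : V → V → ℝ) (hsymm : ∀ u v, c u v = c v u)
    (hnonneg : ∀ u v, 0 ≤ c u v) (hdiag : ∀ v, c v v = 0) (p : V → ℝ) :
    0 ≤ p ⬝ᵥ (lapl c *ᵥ p) := by
  rw [lapl_quadform c hsymm hdiag p]
  apply div_nonneg _ (by norm_num)
  apply Finset.sum_nonneg; intro u _
  apply Finset.sum_nonneg; intro v _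
  exact mul_nonneg (hnonneg u v) (sq_nonneg _)

lemma lapl_mulVec_eq_zero (c : V → V → ℝ) (hsymm : ∀ u v, c u v = c v u)
    (hnonneg : ∀ u v, 0 ≤ c u v) (hdiag : ∀ v, c v v = 0) (p : V → ℝ)
    (h0 : p ⬝ᵥ (lapl c *ᵥ p) = 0) : lapl c *ᵥ p = 0 := by
  rw [lapl_quadform c hsymm hdiag p] at h0
  have hterm : ∀ u ∈ Finset.univ, ∀ v ∈ (Finset.univ : Finset V),
      c u v * ((p u - p v)) ^ 2 = 0 := by
    have h' : ∑ u, ∑ v, c u v * (p u - p v) ^ 2 = 0 := by linarith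
    intro u _ v _
    have := (Finset.sum_eq_zero_iff_of_nonneg (fun u _ =>
      Finset.sum_nonneg fun v _ => mul_nonneg (hnonneg u v) (sq_nonneg _))).mp h' u
        (Finset.mem_univ u)
    exact (Finset.sum_eq_zero_iff_of_nonneg (fun v _ =>
      mul_nonneg (hnonneg u v) (sq_nonneg _))).mp this v (Finset.mem_univ v)
  funext u
  rw [lapl_mulVec c hdiag p u]
  simp only [Pi.zero_apply]
  apply Finset.sum_eq_zero
  intro v _
  have h := hterm u (Finset.mem_univ u) v (Finset.mem_univ v)
  rcases mul_eq_zero.mp h with hc | hp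
  · rw [hc, zero_mul]
  · rw [pow_eq_zero_iff (by norm_num) |>.mp hp, mul_zero]

lemma sum_split (S : Set V) (f : V → ℝ) :
    ∑ v, f v = (∑ i : S, f i.1) + ∑ i : {v : V // v ∉ S}, f i.1 :=
  (Fintype.sum_subtype_add_sum_subtype (· ∈ S) f).symm

lemma dot_mulVec_symm {n : Type*} [Fintype n] (A : Matrix n n ℝ) (hA : Aᵀ = A) (v w : n → ℝ) :
    v ⬝ᵥ (A *ᵥ w) = w ⬝ᵥ (A *ᵥ v) := by
  rw [Matrix.dotProduct_mulVec, ← Matrix.mulVec_transpose, hA, dotProduct_comm]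

lemma dot_cross {m n : Type*} [Fintype m] [Fintype n] (R : Matrix n m ℝ) (x : m → ℝ)
    (z : n → ℝ) : x ⬝ᵥ (Rᵀ *ᵥ z) = z ⬝ᵥ (R *ᵥ x) := by
  rw [Matrix.mulVec_transpose, dotProduct_comm, ← Matrix.dotProduct_mulVec]

/-- The four blocks of `L` determined by `S`. -/
noncomputable def blkA (L : Matrix V V ℝ) (S : Set V) : Matrix S S ℝ :=
  Matrix.of fun i j : S => L i.1 j.1

noncomputable def blkB (L : Matrix V V ℝ) (S : Set V) : Matrix S {v : V // v ∉ S} ℝ :=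
  Matrix.of fun (i : S) (j : {v : V // v ∉ S}) => L i.1 j.1

noncomputable def blkC (L : Matrix V V ℝ) (S : Set V) : Matrix {v : V // v ∉ S} S ℝ :=
  Matrix.of fun (i : {v : V // v ∉ S}) (j : S) => L i.1 j.1

noncomputable def blkD (L : Matrix V V ℝ) (S : Set V) :
    Matrix {v : V // v ∉ S} {v : V // v ∉ S} ℝ :=
  Matrix.of fun i j : {v : V // v ∉ S} => L i.1 j.1

lemma schur_blk (L : Matrix V V ℝ) (S : Set V) :
    schur L S = blkA L S - blkB L S * (blkD L S)⁻¹ * blkC L S := rfl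

lemma block_dot (L : Matrix V V ℝ) (S : Set V) (p : V → ℝ) :
    p ⬝ᵥ (L *ᵥ p) =
      (fun i : S => p i.1) ⬝ᵥ (blkA L S *ᵥ fun i : S => p i.1)
    + (fun i : S => p i.1) ⬝ᵥ (blkB L S *ᵥ fun i : {v : V // v ∉ S} => p i.1)
    + (fun i : {v : V // v ∉ S} => p i.1) ⬝ᵥ (blkC L S *ᵥ fun i : S => p i.1)
    + (fun i : {v : V // v ∉ S} => p i.1) ⬝ᵥ (blkD L S *ᵥ fun i : {v : V // v ∉ S} => p i.1) := by
  have hin : ∀ u : V, (∑ v, L u v * p v)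
      = (∑ j : S, L u j.1 * p j.1) + ∑ j : {v : V // v ∉ S}, L u j.1 * p j.1 :=
    fun u => sum_split S _
  simp only [blkA, blkB, blkC, blkD, dotProduct, Matrix.mulVec, Matrix.of_apply]
  rw [sum_split S (fun u => p u * ∑ v, L u v * p v)]
  simp only [hin, mul_add, Finset.sum_add_distrib]
  ring

end Aux

/-- The main argument, with a generic set `S` so that all typeclass instances on the
subtypes are resolved uniformly (classically). -/
theorem schur_cut_le_proxy_aux {V : Type*} [Fintype V] [DecidableEq V]
    (c : V → V → ℝ) (hsymm : ∀ u v, c u v = c v u) (hnonneg : ∀ u v, 0 ≤ c u v)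
    (hdiag : ∀ v, c v v = 0) (hconn : LapConnected (lapl c))
    (y : V → ℝ) (q : ℝ) (hq : 0 < q)
    (h1 : {v : V | y v ≤ q / 2}.Nonempty)
    (S : Set V) (hS : ∀ v, v ∈ S ↔ (y v ≤ q / 2 ∨ q ≤ y v)) :
    (∑ i : ↥S, ∑ j : ↥S,
        if y i.1 ≤ q / 2 ∧ q ≤ y j.1 then -(schur (lapl c) S i j) else 0)
      ≤ 4 / q ^ 2 * ((∑ u : V, ∑ v : V, c u v * (kappa q (y u) - kappa q (y v)) ^ 2) / 2) := by
  have hq0 : q ≠ 0 := ne_of_gt hq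
  have hq2 : q / 2 < q := by linarith
  set L : Matrix V V ℝ := lapl c with hLdef
  have hmem : ∀ i : S, y i.1 ≤ q / 2 ∨ q ≤ y i.1 := fun i => (hS i.1).mp i.2
  have hLsym : ∀ u v : V, L u v = L v u := by
    intro u v
    by_cases h : u = v
    · subst h; rfl
    · simp [hLdef, lapl, h, Ne.symm h, hsymm u v]
  have hAT : (blkA L S)ᵀ = blkA L S := by
    ext i j; exact hLsym j.1 i.1
  have hBT : (blkB L S)ᵀ = blkC L S := by
    ext i j; exact hLsym j.1 i.1
  have hCT : (blkC L S)ᵀ = blkB L S := by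
    ext i j; exact hLsym j.1 i.1
  have hDT : (blkD L S)ᵀ = blkD L S := by
    ext i j; exact hLsym j.1 i.1
  -- quadratic form of zero-extensions
  have hext : ∀ z : {v : V // v ∉ S} → ℝ,
      ∃ pz : V → ℝ, pz ⬝ᵥ (L *ᵥ pz) = z ⬝ᵥ (blkD L S *ᵥ z) ∧
        (∀ i : S, pz i.1 = 0) ∧ (∀ i : {v : V // v ∉ S}, pz i.1 = z i) := by
    intro z
    set pz : V → ℝ := fun v => if h : v ∈ S then 0 else z ⟨v, h⟩ with hpz
    have hS0 : (fun i : S => pz i.1) = (0 : S → ℝ) := by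
      funext i; exact dif_pos i.2
    have hC0 : (fun i : {v : V // v ∉ S} => pz i.1) = z := by
      funext i; exact dif_neg i.2
    refine ⟨pz, ?_, fun i => dif_pos i.2, fun i => dif_neg i.2⟩
    rw [block_dot L S pz, hS0, hC0]
    simp [Matrix.mulVec_zero, dotProduct_zero, zero_dotProduct]
  have hDpos : ∀ w : {v : V // v ∉ S} → ℝ, 0 ≤ w ⬝ᵥ (blkD L S *ᵥ w) := by
    intro w
    obtain ⟨pz, hpz, -, -⟩ := hext w
    rw [← hpz]
    exact lapl_quadform_nonneg c hsymm hnonneg hdiag pz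
  have hDdet : IsUnit (blkD L S).det := by
    rw [isUnit_iff_ne_zero]
    intro h0
    obtain ⟨z, hz0, hz⟩ := Matrix.exists_mulVec_eq_zero_iff.mpr h0
    obtain ⟨pz, hpz, hpzS, hpzC⟩ := hext z
    have hqz : pz ⬝ᵥ (L *ᵥ pz) = 0 := by rw [hpz, hz]; simp
    have hL0 : L *ᵥ pz = 0 := lapl_mulVec_eq_zero c hsymm hnonneg hdiag pz hqz
    obtain ⟨k, hk⟩ := hconn pz hL0
    obtain ⟨a, ha⟩ := h1
    have haS : a ∈ S := (hS a).mpr (Or.inl ha)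
    have hk0 : k = 0 := by rw [← hk a, hpzS ⟨a, haS⟩]
    apply hz0
    funext i
    have := hk i.1
    rw [hpzC i] at this
    rw [this, hk0]; rfl
  -- row sums
  have hL1 : L *ᵥ (fun _ => (1 : ℝ)) = 0 := by
    funext u
    rw [hLdef, lapl_mulVec c hdiag]
    simp
  have hrowS : ∀ i : S, (∑ j : S, L i.1 j.1) + (∑ j : {v : V // v ∉ S}, L i.1 j.1) = 0 := by
    intro i
    have h := congrFun hL1 i.1
    simp only [Matrix.mulVec, dotProduct, mul_one, Pi.zero_apply] at h
    rw [sum_split S (fun v => L i.1 v)] at h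
    exact h
  have hrowC : ∀ i : {v : V // v ∉ S},
      (∑ j : S, L i.1 j.1) + (∑ j : {v : V // v ∉ S}, L i.1 j.1) = 0 := by
    intro i
    have h := congrFun hL1 i.1
    simp only [Matrix.mulVec, dotProduct, mul_one, Pi.zero_apply] at h
    rw [sum_split S (fun v => L i.1 v)] at h
    exact h
  set onesS : S → ℝ := fun _ => 1 with honesS
  set onesC : {v : V // v ∉ S} → ℝ := fun _ => 1 with honesC
  have hAB1 : blkA L S *ᵥ onesS + blkB L S *ᵥ onesC = 0 := by
    funext i
    simp only [Pi.add_apply, Matrix.mulVec, dotProduct, honesS, honesC, mul_one,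
      blkA, blkB, Matrix.of_apply, Pi.zero_apply]
    exact hrowS i
  have hCD1 : blkC L S *ᵥ onesS + blkD L S *ᵥ onesC = 0 := by
    funext i
    simp only [Pi.add_apply, Matrix.mulVec, dotProduct, honesS, honesC, mul_one,
      blkC, blkD, Matrix.of_apply, Pi.zero_apply]
    exact hrowC i
  have hDinvC1 : (blkD L S)⁻¹ *ᵥ (blkC L S *ᵥ onesS) = -onesC := by
    have hD1 : blkD L S *ᵥ onesC = -(blkC L S *ᵥ onesS) := by
      rw [eq_neg_iff_add_eq_zero, add_comm]; exact hCD1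
    have h := congrArg (fun v => (blkD L S)⁻¹ *ᵥ v) hD1
    simp only [Matrix.mulVec_mulVec] at h
    rw [Matrix.nonsing_inv_mul _ hDdet, Matrix.one_mulVec] at h
    rw [Matrix.mulVec_neg] at h
    exact neg_eq_iff_eq_neg.mp h.symm
  have hM1 : schur L S *ᵥ onesS = 0 := by
    rw [schur_blk, Matrix.sub_mulVec, ← Matrix.mulVec_mulVec, ← Matrix.mulVec_mulVec,
      hDinvC1, Matrix.mulVec_neg, sub_neg_eq_add]
    exact hAB1
  have hMT : (schur L S)ᵀ = schur L S := by
    rw [schur_blk, Matrix.transpose_sub, Matrix.transpose_mul, Matrix.transpose_mul,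
      hAT, hCT, Matrix.transpose_nonsing_inv, hDT, hBT, Matrix.mul_assoc]
  have hMsym : ∀ a b : S, schur L S a b = schur L S b a := by
    intro a b
    conv_lhs => rw [← hMT]
    rfl
  have hcol : ∀ j : S, ∑ i : S, schur L S i j = 0 := by
    intro j
    have h := congrFun hM1 j
    simp only [Matrix.mulVec, dotProduct, honesS, mul_one, Pi.zero_apply] at h
    calc ∑ i : S, schur L S i j = ∑ i : S, schur L S j i :=
          Finset.sum_congr rfl fun i _ => hMsym i j
      _ = 0 := h
  -- the indicator vector and the potential
  set x : S → ℝ := fun i => if q ≤ y i.1 then 1 else 0 with hxdef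
  set p : V → ℝ := fun v => 2 / q * kappa q (y v) - 1 with hpdef
  have hdisj : ∀ v : V, y v ≤ q / 2 → ¬ q ≤ y v := by
    intro v hv hc; linarith
  have hpS : (fun i : S => p i.1) = x := by
    funext i
    rcases hmem i with h | h
    · have hk : kappa q (y i.1) = q / 2 := by
        rw [kappa, max_eq_left h, min_eq_right (le_of_lt hq2)]
      simp only [hpdef, hxdef, hk, if_neg (hdisj i.1 h)]
      field_simp
      norm_num
    · have hk : kappa q (y i.1) = q := by
        rw [kappa, max_eq_right (le_trans (le_of_lt hq2) h), min_eq_left h]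
      simp only [hpdef, hxdef, hk, if_pos h]
      field_simp
      norm_num
  -- step 1 : the LHS equals the quadratic form of the Schur complement at x
  have key1 : (∑ i : S, ∑ j : S,
        if y i.1 ≤ q / 2 ∧ q ≤ y j.1 then -(schur L S i j) else 0)
      = x ⬝ᵥ (schur L S *ᵥ x) := by
    have hrhs : x ⬝ᵥ (schur L S *ᵥ x) = ∑ j : S, ∑ i : S, x i * (schur L S i j * x j) := by
      simp only [dotProduct, Matrix.mulVec, Finset.mul_sum]
      exact Finset.sum_comm
    rw [hrhs, Finset.sum_comm]
    apply Finset.sum_congr rfl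
    intro j _
    by_cases hj : q ≤ y j.1
    · have hterm : ∀ i : S, (if y i.1 ≤ q / 2 ∧ q ≤ y j.1 then -(schur L S i j) else 0)
          = x i * (schur L S i j * x j) + (-(schur L S i j)) := by
        intro i
        rcases hmem i with hi | hi
        · simp [hxdef, hi, hj, hdisj i.1 hi]
        · have hni : ¬ y i.1 ≤ q / 2 := fun h => hdisj i.1 h hi
          simp [hxdef, hi, hj, hni]
      rw [Finset.sum_congr rfl (fun i _ => hterm i), Finset.sum_add_distrib]
      rw [Finset.sum_neg_distrib, hcol j, neg_zero, add_zero]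
    · simp [hxdef, hj]
  -- step 2 : the Schur quadratic form at x is at most the Laplacian quadratic form at p
  have key2 : x ⬝ᵥ (schur L S *ᵥ x) ≤ p ⬝ᵥ (L *ᵥ p) := by
    set z : {v : V // v ∉ S} → ℝ := fun i => p i.1 with hzdef
    have hbd : p ⬝ᵥ (L *ᵥ p) = x ⬝ᵥ (blkA L S *ᵥ x) + x ⬝ᵥ (blkB L S *ᵥ z)
        + z ⬝ᵥ (blkC L S *ᵥ x) + z ⬝ᵥ (blkD L S *ᵥ z) := by
      have h := block_dot L S p
      rw [hpS] at h
      exact h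
    set u : {v : V // v ∉ S} → ℝ := (blkD L S)⁻¹ *ᵥ (blkC L S *ᵥ x) with hudef
    have hDu : blkD L S *ᵥ u = blkC L S *ᵥ x := by
      rw [hudef, Matrix.mulVec_mulVec, Matrix.mul_nonsing_inv _ hDdet, Matrix.one_mulVec]
    have hMx : schur L S *ᵥ x = blkA L S *ᵥ x - blkB L S *ᵥ u := by
      rw [schur_blk, Matrix.sub_mulVec, ← Matrix.mulVec_mulVec, ← Matrix.mulVec_mulVec, ← hudef]
    have hxBz : x ⬝ᵥ (blkB L S *ᵥ z) = z ⬝ᵥ (blkC L S *ᵥ x) := by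
      rw [← hCT]; exact dot_cross _ _ _
    have hxBu : x ⬝ᵥ (blkB L S *ᵥ u) = u ⬝ᵥ (blkC L S *ᵥ x) := by
      rw [← hCT]; exact dot_cross _ _ _
    have huDz : u ⬝ᵥ (blkD L S *ᵥ z) = z ⬝ᵥ (blkD L S *ᵥ u) := dot_mulVec_symm _ hDT u z
    have hw := hDpos (z + u)
    have hexp : (z + u) ⬝ᵥ (blkD L S *ᵥ (z + u))
        = z ⬝ᵥ (blkD L S *ᵥ z) + z ⬝ᵥ (blkC L S *ᵥ x) + z ⬝ᵥ (blkC L S *ᵥ x)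
          + u ⬝ᵥ (blkC L S *ᵥ x) := by
      rw [Matrix.mulVec_add, dotProduct_add, add_dotProduct,
        add_dotProduct, huDz, hDu]
      ring
    have hfin : x ⬝ᵥ (schur L S *ᵥ x)
        = x ⬝ᵥ (blkA L S *ᵥ x) - u ⬝ᵥ (blkC L S *ᵥ x) := by
      rw [hMx, dotProduct_sub, hxBu]
    rw [hfin, hbd, hxBz]
    nlinarith [hw, hexp]
  -- step 3 : the Laplacian quadratic form at p equals the right-hand side
  have key3 : p ⬝ᵥ (L *ᵥ p)
      = 4 / q ^ 2 * ((∑ u : V, ∑ v : V, c u v * (kappa q (y u) - kappa q (y v)) ^ 2) / 2) := by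
    rw [hLdef, lapl_quadform c hsymm hdiag p]
    have h : ∑ u : V, ∑ v : V, c u v * (p u - p v) ^ 2
        = ∑ u : V, ∑ v : V, 4 / q ^ 2 * (c u v * (kappa q (y u) - kappa q (y v)) ^ 2) := by
      apply Finset.sum_congr rfl; intro u _
      apply Finset.sum_congr rfl; intro v _
      rw [hpdef]
      field_simp
      ring
    rw [h]
    simp only [← Finset.mul_sum]
    ring
  rw [key1]
  rw [← key3]
  exact key2


/-- The proxy bound: the total Schur complement weight between the sweep sets
`S_{≤ q/2}` and `S_{≥ q}` is at most
`(4/q²) ∑_{uv ∈ E(G)} c_uv (κ_q(y_u) - κ_q(y_v))²`. -/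
theorem schur_cut_le_proxy {V : Type*} [Fintype V] [DecidableEq V]
    (c : V → V → ℝ) (hsymm : ∀ u v, c u v = c v u) (hnonneg : ∀ u v, 0 ≤ c u v)
    (hdiag : ∀ v, c v v = 0) (hconn : LapConnected (lapl c))
    (y : V → ℝ) (q : ℝ) (hq : 0 < q)
    (h1 : {v : V | y v ≤ q / 2}.Nonempty) (h2 : {v : V | q ≤ y v}.Nonempty) :
    (∑ i : ↥({v : V | y v ≤ q / 2} ∪ {v : V | q ≤ y v}),
      ∑ j : ↥({v : V | y v ≤ q / 2} ∪ {v : V | q ≤ y v}),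
        if y i.1 ≤ q / 2 ∧ q ≤ y j.1 then
          -(schur (lapl c) ({v : V | y v ≤ q / 2} ∪ {v : V | q ≤ y v}) i j) else 0)
      ≤ 4 / q ^ 2 * ((∑ u : V, ∑ v : V, c u v * (kappa q (y u) - kappa q (y v)) ^ 2) / 2) := by
  have h := schur_cut_le_proxy_aux c hsymm hnonneg hdiag hconn y q hq h1
    ({v : V | y v ≤ q / 2} ∪ {v : V | q ≤ y v}) (fun v => Iff.rfl)
  refine le_of_eq_of_le ?_ h
  apply Finset.sum_congr (by congr 1; exact Subsingleton.elim _ _)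
  intro i _
  apply Finset.sum_congr (by congr 1; exact Subsingleton.elim _ _)
  intro j _
  rfl
end
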